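/- For every integer d ≥ 1 and every ℓ = (ℓ₁, …, ℓ_d) ∈ ℤ^d with ℓ ≠ 0, setting c := Σ_{i=1}^{d} ℓ_i λ_i, as elements of ℚ(λ₁, …, λ_d)[t] one has P(t, λ) ≠ P(t + c, λ) and P(t, λ) ≠ −P(t + c, λ), where P(t + c, λ) denotes the polynomial obtained from P by substituting t + c for t. -/

import Mathlib

/-! A polynomial `p` over a domain of characteristic zero with `p(t + c) = p(t)` and `c ≠ 0`
takes the value `p(0)` at every `n c`, so it is constant; and `p(t + c) = -p(t)` gives
`p(t + 2c) = p(t)`. Since `P` has degree `d ≥ 1` and `c ≠ 0` by the linear independence of the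
`λᵢ`, neither identity can hold. -/

/-- The image of the indeterminate `λ_i` in the rational function field
`ℚ(λ₁, …, λ_d)`. -/
noncomputable def lamVar (d : ℕ) (i : Fin d) : FractionRing (MvPolynomial (Fin d) ℚ) :=
  algebraMap (MvPolynomial (Fin d) ℚ) (FractionRing (MvPolynomial (Fin d) ℚ))
    (MvPolynomial.X i)

/-- The polynomial `P(t, λ) = ∏ᵢ (t + λᵢ) - 2 ∑ᵢ λᵢ ∏_{k ≠ i} (t + λₖ)` as an element of
`ℚ(λ₁, …, λ_d)[t]`. -/
noncomputable def PPoly (d : ℕ) : Polynomial (FractionRing (MvPolynomial (Fin d) ℚ)) :=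
  (∏ i : Fin d, (Polynomial.X + Polynomial.C (lamVar d i))) -
    2 * ∑ i : Fin d, Polynomial.C (lamVar d i) *
      ∏ k ∈ Finset.univ.erase i, (Polynomial.X + Polynomial.C (lamVar d k))

open Polynomial

namespace Polynomial

variable {R : Type*} [CommRing R]

theorem eval_natCast_mul_of_comp_X_add_C_eq {p : R[X]} {c : R} (h : p.comp (X + C c) = p)
    (n : ℕ) : p.eval (n * c) = p.eval 0 := by
  induction n with
  | zero => simp
  | succ n ih =>
    calc p.eval ((n + 1 : ℕ) * c) = (p.comp (X + C c)).eval (n * c) := by simp [add_one_mul]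
      _ = p.eval 0 := by rw [h, ih]

theorem comp_X_add_C_comp_X_add_C (p : R[X]) (a b : R) :
    (p.comp (X + C a)).comp (X + C b) = p.comp (X + C (a + b)) := by
  rw [comp_assoc]; simp [C_add, add_assoc, add_comm (C a)]

theorem natDegree_sum_C_mul_prod_erase_lt {ι : Type*} [DecidableEq ι] [Nontrivial R]
    {s : Finset ι} (hs : s.Nonempty) (a b : ι → R) :
    (∑ i ∈ s, C (b i) * ∏ k ∈ s.erase i, (X + C (a k))).natDegree < s.card := by
  have hle : (∑ i ∈ s, C (b i) * ∏ k ∈ s.erase i, (X + C (a k))).natDegree ≤ s.card - 1 := by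
    refine natDegree_sum_le_of_forall_le _ _ fun i hi => (natDegree_C_mul_le _ _).trans ?_
    rw [natDegree_prod_of_monic _ _ fun k _ => monic_X_add_C (a k)]
    simp [Finset.card_erase_of_mem hi]
  have := hs.card_pos
  omega

variable [IsDomain R] [CharZero R]

theorem natDegree_eq_zero_of_comp_X_add_C_eq {p : R[X]} {c : R} (hc : c ≠ 0)
    (h : p.comp (X + C c) = p) : p.natDegree = 0 := by
  suffices hconst : p - C (p.eval 0) = 0 by
    rw [sub_eq_zero.mp hconst, natDegree_C]
  refine eq_zero_of_infinite_isRoot _ (Set.infinite_of_injective_forall_mem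
    (f := fun n : ℕ => (n : R) * c) (fun m n hmn => ?_) fun n => ?_)
  · exact_mod_cast mul_right_cancel₀ hc hmn
  · simp [eval_natCast_mul_of_comp_X_add_C_eq h]

theorem natDegree_eq_zero_of_comp_X_add_C_eq_neg {p : R[X]} {c : R} (hc : c ≠ 0)
    (h : p.comp (X + C c) = -p) : p.natDegree = 0 := by
  have h2c : c + c ≠ 0 := by rw [← two_mul]; exact mul_ne_zero two_ne_zero hc
  refine natDegree_eq_zero_of_comp_X_add_C_eq h2c ?_
  rw [← comp_X_add_C_comp_X_add_C, h, neg_comp, h, neg_neg]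

end Polynomial

theorem natDegree_PPoly {d : ℕ} (hd : 1 ≤ d) : (PPoly d).natDegree = d := by
  have hprod : (∏ i, (X + C (lamVar d i))).natDegree = d := by
    rw [natDegree_prod_of_monic _ _ fun i _ => monic_X_add_C _]
    simp
  have hsum := natDegree_sum_C_mul_prod_erase_lt (Finset.univ_nonempty_iff.mpr
    (Fin.pos_iff_nonempty.mp hd)) (lamVar d) (lamVar d)
  rw [Finset.card_univ, Fintype.card_fin] at hsum
  have h2sum : (2 * ∑ i, C (lamVar d i) *
      ∏ k ∈ Finset.univ.erase i, (X + C (lamVar d k))).natDegree < d :=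
    (natDegree_mul_le.trans (by simp)).trans_lt hsum
  rw [PPoly, natDegree_sub_eq_left_of_natDegree_lt (h2sum.trans_eq hprod.symm), hprod]

theorem sum_intCast_mul_lamVar_ne_zero {d : ℕ} {ℓ : Fin d → ℤ} (hℓ : ℓ ≠ 0) :
    ∑ i, (ℓ i : FractionRing (MvPolynomial (Fin d) ℚ)) * lamVar d i ≠ 0 := by
  intro h
  have hX : ∑ i, (ℓ i : ℚ) • (MvPolynomial.X i : MvPolynomial (Fin d) ℚ) = 0 := by
    apply IsFractionRing.injective (MvPolynomial (Fin d) ℚ) (FractionRing (MvPolynomial (Fin d) ℚ))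
    simpa [lamVar, MvPolynomial.smul_eq_C_mul] using h
  refine hℓ (funext fun i => ?_)
  exact_mod_cast Fintype.linearIndependent_iff.mp (MvPolynomial.linearIndependent_X _ _) _ hX i

/-- For `ℓ ∈ ℤ^d` nonzero and `c = ∑ᵢ ℓᵢ λᵢ`, one has `P(t, λ) ≠ P(t + c, λ)` and
`P(t, λ) ≠ -P(t + c, λ)`. -/
theorem PPoly_ne_translated (d : ℕ) (hd : 1 ≤ d) (ℓ : Fin d → ℤ) (hℓ : ℓ ≠ 0) :
    PPoly d ≠ (PPoly d).comp
      (Polynomial.X + Polynomial.C (∑ i : Fin d,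
        (ℓ i : FractionRing (MvPolynomial (Fin d) ℚ)) * lamVar d i)) ∧
    PPoly d ≠ -((PPoly d).comp
      (Polynomial.X + Polynomial.C (∑ i : Fin d,
        (ℓ i : FractionRing (MvPolynomial (Fin d) ℚ)) * lamVar d i))) := by
  have hc := sum_intCast_mul_lamVar_ne_zero hℓ
  have hdeg : (PPoly d).natDegree ≠ 0 := by rw [natDegree_PPoly hd]; omega
  exact ⟨fun h => hdeg (natDegree_eq_zero_of_comp_X_add_C_eq hc h.symm),
    fun h => hdeg (natDegree_eq_zero_of_comp_X_add_C_eq_neg hc (neg_eq_iff_eq_neg.mpr h).symm)⟩
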